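/- Let m = 2^t for a positive integer t and let P = (ℤ/2)[α]/⟨α^{m+1}⟩. Then in the tensor square P ⊗_{ℤ/2} P one has (α⊗1 + 1⊗α)^{2m−1} = α^{m−1} ⊗ α^m + α^m ⊗ α^{m−1}, and this element is nonzero. -/

import Mathlib

open scoped TensorProduct

noncomputable section

/-- The ring `P = (ℤ/2)[α]/⟨α^{m+1}⟩`, the mod-2 cohomology ring of `ℝPᵐ`. -/
abbrev ProjRing (m : ℕ) : Type :=
  Polynomial (ZMod 2) ⧸ Ideal.span {(Polynomial.X : Polynomial (ZMod 2)) ^ (m + 1)}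

/-- The class `α` of `X` in `P`. -/
def palpha (m : ℕ) : ProjRing m := Ideal.Quotient.mk _ Polynomial.X

end

/-!
Since `α ^ (m + 1) = 0`, only the two middle terms of the binomial expansion of
`(α ⊗ 1 + 1 ⊗ α) ^ (2m - 1)` survive, and both carry the coefficient `C(2m - 1, m)`. With
`2m - 1 = 2 ^ (t + 1) - 1` this coefficient is odd: Pascal's rule and `p ∣ C(p ^ s, k)` for
`0 < k < p ^ s` give `C(p ^ s - 1, k) ≡ (-1) ^ k [MOD p]`. The resulting sum
`α ^ (m - 1) ⊗ α ^ m + α ^ m ⊗ α ^ (m - 1)` consists of two distinct members of the tensor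
product of the power basis `1, α, …, α ^ m` with itself, so it is nonzero.
-/

open Polynomial TensorProduct

theorem ZMod.natCast_choose_prime_pow_sub_one {p : ℕ} [hp : Fact p.Prime] (s : ℕ) :
    ∀ k < p ^ s, ((p ^ s - 1).choose k : ZMod p) = (-1) ^ k
  | 0, _ => by simp
  | k + 1, hk => by
    have hpascal : ((p ^ s).choose (k + 1) : ZMod p) =
        (p ^ s - 1).choose k + (p ^ s - 1).choose (k + 1) := by
      rw [← Nat.cast_add, ← Nat.choose_succ_succ', Nat.sub_add_cancel (by omega)]
    have hdvd : ((p ^ s).choose (k + 1) : ZMod p) = 0 :=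
      (ZMod.natCast_eq_zero_iff _ _).2 (hp.out.dvd_choose_pow k.succ_ne_zero hk.ne)
    rw [hdvd, natCast_choose_prime_pow_sub_one s k (by omega)] at hpascal
    linear_combination -hpascal

theorem add_pow_two_mul_sub_one_of_pow_succ_eq_zero {S : Type*} [CommSemiring S] {a b : S}
    {m : ℕ} (hm : 0 < m) (ha : a ^ (m + 1) = 0) (hb : b ^ (m + 1) = 0) :
    (a + b) ^ (2 * m - 1) =
      (2 * m - 1).choose m * (a ^ (m - 1) * b ^ m + a ^ m * b ^ (m - 1)) := by
  rw [add_pow, Finset.sum_eq_add (m - 1) m (by omega)]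
  · rw [show 2 * m - 1 - (m - 1) = m by omega, show 2 * m - 1 - m = m - 1 by omega,
      Nat.choose_symm_of_eq_add (show 2 * m - 1 = (m - 1) + m by omega)]
    ring
  · intro k _ hk
    rcases lt_or_gt_of_ne hk.2 with h | h
    · rw [pow_eq_zero_of_le (by omega) hb, mul_zero, zero_mul]
    · rw [pow_eq_zero_of_le (by omega) ha, zero_mul, zero_mul]
  · exact fun h => absurd (Finset.mem_range.2 (by omega)) h
  · exact fun h => absurd (Finset.mem_range.2 (by omega)) h

theorem Algebra.TensorProduct.tmul_one_add_one_tmul_pow_two_mul_sub_one {R A : Type*}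
    [CommSemiring R] [CommSemiring A] [Algebra R A] {x : A} {m : ℕ} (hm : 0 < m)
    (hx : x ^ (m + 1) = 0) :
    (x ⊗ₜ[R] (1 : A) + (1 : A) ⊗ₜ[R] x) ^ (2 * m - 1) =
      (2 * m - 1).choose m • ((x ^ (m - 1)) ⊗ₜ[R] (x ^ m) + (x ^ m) ⊗ₜ[R] (x ^ (m - 1))) := by
  rw [add_pow_two_mul_sub_one_of_pow_succ_eq_zero hm (by rw [tmul_pow, hx, zero_tmul])
    (by rw [tmul_pow, hx, tmul_zero]), nsmul_eq_mul]
  simp [tmul_pow, tmul_mul_tmul]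

theorem Module.Basis.add_ne_zero {ι R M : Type*} [Semiring R] [Nontrivial R] [AddCommMonoid M]
    [Module R M] (B : Module.Basis ι R M) {i j : ι} (hij : i ≠ j) : B i + B j ≠ 0 := by
  intro h
  have := congrArg (fun x => B.repr x i) h
  simp [Finsupp.single_eq_of_ne hij] at this

theorem PowerBasis.gen_pow_tmul_add_gen_pow_tmul_ne_zero {R A : Type*} [CommRing R]
    [Nontrivial R] [Ring A] [Algebra R A] (pb : PowerBasis R A) {i j : ℕ} (hi : i < pb.dim)
    (hj : j < pb.dim) (hij : i ≠ j) :
    (pb.gen ^ i) ⊗ₜ[R] (pb.gen ^ j) + (pb.gen ^ j) ⊗ₜ[R] (pb.gen ^ i) ≠ 0 := by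
  have := (pb.basis.tensorProduct pb.basis).add_ne_zero
    (i := (⟨i, hi⟩, ⟨j, hj⟩)) (j := (⟨j, hj⟩, ⟨i, hi⟩)) (by simp [hij])
  simpa [PowerBasis.basis_eq_pow] using this

theorem palpha_pow_succ (m : ℕ) : palpha m ^ (m + 1) = 0 :=
  Ideal.Quotient.eq_zero_iff_mem.2 (Ideal.subset_span rfl)

noncomputable def ProjRing.powerBasis (m : ℕ) : PowerBasis (ZMod 2) (ProjRing m) :=
  AdjoinRoot.powerBasis' (monic_X_pow (m + 1))

theorem ProjRing.powerBasis_gen (m : ℕ) : (ProjRing.powerBasis m).gen = palpha m := rfl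

theorem ProjRing.powerBasis_dim (m : ℕ) : (ProjRing.powerBasis m).dim = m + 1 :=
  natDegree_X_pow _

theorem projRing_tensor_alpha_pow_general (m t : ℕ) (hm : m = 2 ^ t) :
    (((palpha m) ⊗ₜ[ZMod 2] (1 : ProjRing m) +
          (1 : ProjRing m) ⊗ₜ[ZMod 2] (palpha m)) ^ (2 * m - 1) =
        (palpha m ^ (m - 1)) ⊗ₜ[ZMod 2] (palpha m ^ m) +
          (palpha m ^ m) ⊗ₜ[ZMod 2] (palpha m ^ (m - 1))) ∧
      ((palpha m) ⊗ₜ[ZMod 2] (1 : ProjRing m) +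
          (1 : ProjRing m) ⊗ₜ[ZMod 2] (palpha m)) ^ (2 * m - 1) ≠ 0 := by
  have hm0 : 0 < m := hm ▸ Nat.two_pow_pos t
  have hchoose : ((2 * m - 1).choose m : ZMod 2) = 1 := by
    rw [show 2 * m = 2 ^ (t + 1) by rw [hm, pow_succ, mul_comm],
      ZMod.natCast_choose_prime_pow_sub_one (t + 1) m (by omega), ZMod.neg_eq_self_mod_two,
      one_pow]
  have hexpand := Algebra.TensorProduct.tmul_one_add_one_tmul_pow_two_mul_sub_one (R := ZMod 2)
    hm0 (palpha_pow_succ m)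
  rw [← Nat.cast_smul_eq_nsmul (ZMod 2), hchoose, one_smul] at hexpand
  refine ⟨hexpand, hexpand ▸ ?_⟩
  have := (ProjRing.powerBasis m).gen_pow_tmul_add_gen_pow_tmul_ne_zero
    (i := m - 1) (j := m) (by rw [ProjRing.powerBasis_dim]; omega)
    (by rw [ProjRing.powerBasis_dim]; omega) (by omega)
  rwa [ProjRing.powerBasis_gen] at this

/-- For `m = 2^t` (`t` positive), in `P ⊗ P` one has
`(α⊗1 + 1⊗α)^{2m-1} = α^{m-1} ⊗ α^m + α^m ⊗ α^{m-1}`, and this element is nonzero. -/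
theorem projRing_tensor_alpha_pow (m t : ℕ) (ht : 0 < t) (hm : m = 2 ^ t) :
    (((palpha m) ⊗ₜ[ZMod 2] (1 : ProjRing m) +
          (1 : ProjRing m) ⊗ₜ[ZMod 2] (palpha m)) ^ (2 * m - 1) =
        (palpha m ^ (m - 1)) ⊗ₜ[ZMod 2] (palpha m ^ m) +
          (palpha m ^ m) ⊗ₜ[ZMod 2] (palpha m ^ (m - 1))) ∧
      ((palpha m) ⊗ₜ[ZMod 2] (1 : ProjRing m) +
          (1 : ProjRing m) ⊗ₜ[ZMod 2] (palpha m)) ^ (2 * m - 1) ≠ 0 :=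
  projRing_tensor_alpha_pow_general m t hm
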